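/- Let μ be a positive measure on ℝ₊ⁿ∖{0} with ∫ min(1, Σ_j u_j) dμ(u) < ∞, and define ψ(s) := ∫_{ℝ₊ⁿ∖{0}} (e^{s·u} − 1) dμ(u) for s ∈ (−∞,0)ⁿ. Suppose there exist A > 0 and γ ∈ (0,1) such that −ψ(−c,…,−c) ≤ A c^γ for every real c ≥ 1. Then, with σ := 1 − e^{−1}, for every c ≥ 1 one has ∫_{{u ∈ ℝ₊ⁿ∖{0} : c·Σ_j u_j ≤ 1}} (Σ_{j=1}^n u_j) dμ(u) ≤ (A/σ) c^{γ−1} and μ({u ∈ ℝ₊ⁿ∖{0} : c·Σ_j u_j > 1}) ≤ (A/σ) c^γ. -/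
import Mathlib


open MeasureTheory

/-- The positive orthant `ℝ₊ⁿ = [0,∞)ⁿ`. -/
def posOrthant (n : ℕ) : Set (Fin n → ℝ) := {u | ∀ j, 0 ≤ u j}

lemma key_ineq (x : ℝ) (hx : 0 ≤ x) :
    (1 - Real.exp (-1)) * min 1 x ≤ 1 - Real.exp (-x) := by
  rcases le_total x 1 with h | h
  · rw [min_eq_right h]
    have hcx := convexOn_exp.2 (Set.mem_univ (0:ℝ)) (Set.mem_univ (-1:ℝ))
      (by linarith : (0:ℝ) ≤ 1 - x) hx (by ring)
    simp only [smul_eq_mul, mul_zero, zero_add, mul_neg_one, Real.exp_zero] at hcx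
    nlinarith [Real.exp_pos (-1)]
  · rw [min_eq_left h]
    have : Real.exp (-x) ≤ Real.exp (-1) := Real.exp_le_exp.mpr (by linarith)
    linarith

/-- Let `μ` be a positive measure on `ℝ₊ⁿ∖{0}` with
`∫ min(1, Σ_j u_j) dμ(u) < ∞` and `ψ(s) = ∫ (e^{s·u} − 1) dμ(u)` for `s ∈ (−∞,0)ⁿ`.
If there are `A > 0` and `γ ∈ (0,1)` with `−ψ(−c,…,−c) ≤ A c^γ` for every real `c ≥ 1`,
then with `σ = 1 − e^{−1}`, for every `c ≥ 1`:
`∫_{c Σ u_j ≤ 1} (Σ u_j) dμ ≤ (A/σ) c^{γ−1}` and `μ{c Σ u_j > 1} ≤ (A/σ) c^γ`. -/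
theorem levy_measure_tail_estimates
    (n : ℕ) (μ : Measure (Fin n → ℝ))
    (hμsupp : μ {u | ¬(u ∈ posOrthant n ∧ u ≠ 0)} = 0)
    (hμint : ∫⁻ u, ENNReal.ofReal (min 1 (∑ j, u j)) ∂μ < ⊤)
    (A γ : ℝ) (hA : 0 < A) (hγ : γ ∈ Set.Ioo (0 : ℝ) 1)
    (hdiag : ∀ c : ℝ, 1 ≤ c →
      -(∫ u, (Real.exp (∑ j, (-c) * u j) - 1) ∂μ) ≤ A * c ^ γ)
    (c : ℝ) (hc : 1 ≤ c) :
    (∫⁻ u in {u : Fin n → ℝ | c * ∑ j, u j ≤ 1}, ENNReal.ofReal (∑ j, u j) ∂μ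
        ≤ ENNReal.ofReal (A / (1 - Real.exp (-1)) * c ^ (γ - 1)))
    ∧ μ {u : Fin n → ℝ | 1 < c * ∑ j, u j}
        ≤ ENNReal.ofReal (A / (1 - Real.exp (-1)) * c ^ γ) := by
  set σ : ℝ := 1 - Real.exp (-1) with hσdef
  have hσ : 0 < σ := by
    have : Real.exp (-1) < Real.exp 0 := Real.exp_lt_exp.mpr (by norm_num)
    rw [Real.exp_zero] at this; rw [hσdef]; linarith
  have hc0 : (0:ℝ) < c := lt_of_lt_of_le one_pos hc
  set S : (Fin n → ℝ) → ℝ := fun u => ∑ j, u j with hSdef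
  have hS : Measurable S := Finset.univ.measurable_sum fun j _ => measurable_pi_apply j
  have hae : ∀ᵐ u ∂μ, u ∈ posOrthant n ∧ u ≠ 0 := ae_iff.mpr hμsupp
  have hSnn : ∀ᵐ u ∂μ, 0 ≤ S u :=
    hae.mono fun u hu => Finset.sum_nonneg fun j _ => hu.1 j
  set g : (Fin n → ℝ) → ℝ := fun u => 1 - Real.exp (-(c * S u)) with hgdef
  have harg : ∀ u : Fin n → ℝ, (∑ j, (-c) * u j) = -(c * S u) := by
    intro u
    simp [hSdef, Finset.mul_sum, neg_mul, Finset.sum_neg_distrib]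
  -- bound: a.e., ofReal ‖g u‖ ≤ ofReal (min 1 (c * S u))
  have hgle_min : ∀ᵐ u ∂μ, 0 ≤ g u ∧ g u ≤ min 1 (c * S u) := by
    refine hSnn.mono fun u hu => ?_
    have hcs : 0 ≤ c * S u := mul_nonneg hc0.le hu
    have h1 : Real.exp (-(c * S u)) ≤ 1 := by
      rw [Real.exp_le_one_iff]; linarith
    have h2 : 1 - (c * S u) ≤ Real.exp (-(c * S u)) := by
      have := Real.add_one_le_exp (-(c * S u)); linarith
    have h3 : 0 < Real.exp (-(c * S u)) := Real.exp_pos _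
    exact ⟨by simp [hgdef]; linarith, le_min (by simp [hgdef]; linarith) (by simp [hgdef]; linarith)⟩
  -- finiteness of ∫⁻ min(1, cS)
  have hmin_le : ∀ᵐ u ∂μ, ENNReal.ofReal (min 1 (c * S u))
      ≤ ENNReal.ofReal c * ENNReal.ofReal (min 1 (S u)) := by
    refine hSnn.mono fun u hu => ?_
    rw [← ENNReal.ofReal_mul hc0.le]
    apply ENNReal.ofReal_le_ofReal
    rcases le_total (S u) 1 with h | h
    · rw [min_eq_right h]
      exact min_le_right _ _
    · rw [min_eq_left h, mul_one]
      exact (min_le_left _ _).trans hc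
  have hmin_lt : ∫⁻ u, ENNReal.ofReal (min 1 (c * S u)) ∂μ < ⊤ := by
    calc ∫⁻ u, ENNReal.ofReal (min 1 (c * S u)) ∂μ
        ≤ ∫⁻ u, ENNReal.ofReal c * ENNReal.ofReal (min 1 (S u)) ∂μ :=
          lintegral_mono_ae hmin_le
      _ = ENNReal.ofReal c * ∫⁻ u, ENNReal.ofReal (min 1 (S u)) ∂μ :=
          lintegral_const_mul' _ _ ENNReal.ofReal_ne_top
      _ < ⊤ := ENNReal.mul_lt_top ENNReal.ofReal_lt_top hμint
  -- integrability of g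
  have hg_int : Integrable g μ := by
    refine ⟨((Real.continuous_exp.measurable.comp ((hS.const_mul c).neg)).const_sub 1).aestronglyMeasurable, ?_⟩
    rw [hasFiniteIntegral_iff_norm]
    calc ∫⁻ u, ENNReal.ofReal ‖g u‖ ∂μ
        ≤ ∫⁻ u, ENNReal.ofReal (min 1 (c * S u)) ∂μ := by
          refine lintegral_mono_ae (hgle_min.mono fun u hu => ?_)
          exact ENNReal.ofReal_le_ofReal (by rw [Real.norm_eq_abs, abs_of_nonneg hu.1]; exact hu.2)
      _ < ⊤ := hmin_lt
  -- ∫ g ≤ A c^γ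
  have hgint_le : ∫ u, g u ∂μ ≤ A * c ^ γ := by
    have h1 := hdiag c hc
    have h2 : ∫ u, g u ∂μ = -(∫ u, (Real.exp (∑ j, (-c) * u j) - 1) ∂μ) := by
      rw [← integral_neg]
      refine integral_congr_ae (Filter.Eventually.of_forall fun u => ?_)
      show g u = -(Real.exp (∑ j, (-c) * u j) - 1)
      rw [harg u]; simp [hgdef]
    linarith [h2 ▸ h1]
  -- central bound
  have hgnn : 0 ≤ᵐ[μ] g := hgle_min.mono fun u hu => hu.1
  have hkey : ENNReal.ofReal σ * ∫⁻ u, ENNReal.ofReal (min 1 (c * S u)) ∂μ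
      ≤ ENNReal.ofReal (A * c ^ γ) := by
    rw [← lintegral_const_mul' _ _ ENNReal.ofReal_ne_top]
    calc ∫⁻ u, ENNReal.ofReal σ * ENNReal.ofReal (min 1 (c * S u)) ∂μ
        ≤ ∫⁻ u, ENNReal.ofReal (g u) ∂μ := by
          refine lintegral_mono_ae (hSnn.mono fun u hu => ?_)
          rw [← ENNReal.ofReal_mul hσ.le]
          exact ENNReal.ofReal_le_ofReal (key_ineq (c * S u) (mul_nonneg hc0.le hu))
      _ = ENNReal.ofReal (∫ u, g u ∂μ) :=
          (ofReal_integral_eq_lintegral_ofReal hg_int hgnn).symm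
      _ ≤ ENNReal.ofReal (A * c ^ γ) := ENNReal.ofReal_le_ofReal hgint_le
  have hminbound : ∫⁻ u, ENNReal.ofReal (min 1 (c * S u)) ∂μ
      ≤ ENNReal.ofReal (A * c ^ γ / σ) := by
    rw [ENNReal.ofReal_div_of_pos hσ]
    rw [ENNReal.le_div_iff_mul_le (Or.inl (by simp [ENNReal.ofReal_eq_zero]; linarith))
      (Or.inl ENNReal.ofReal_ne_top)]
    rw [mul_comm]; exact hkey
  constructor
  · -- part 1
    have hset : MeasurableSet {u : Fin n → ℝ | c * ∑ j, u j ≤ 1} :=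
      measurableSet_le (hS.const_mul c) measurable_const
    have hmul : ENNReal.ofReal c *
        ∫⁻ u in {u : Fin n → ℝ | c * ∑ j, u j ≤ 1}, ENNReal.ofReal (S u) ∂μ
        ≤ ENNReal.ofReal (A * c ^ γ / σ) := by
      rw [← lintegral_const_mul' _ _ ENNReal.ofReal_ne_top]
      calc ∫⁻ u in {u : Fin n → ℝ | c * ∑ j, u j ≤ 1},
              ENNReal.ofReal c * ENNReal.ofReal (S u) ∂μ
          = ∫⁻ u in {u : Fin n → ℝ | c * ∑ j, u j ≤ 1},
              ENNReal.ofReal (min 1 (c * S u)) ∂μ := by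
            refine lintegral_congr_ae ?_
            filter_upwards [ae_restrict_of_ae hSnn, ae_restrict_mem hset] with u hu hmem
            rw [← ENNReal.ofReal_mul hc0.le, min_eq_right hmem]
        _ ≤ ∫⁻ u, ENNReal.ofReal (min 1 (c * S u)) ∂μ :=
            setLIntegral_le_lintegral _ _
        _ ≤ ENNReal.ofReal (A * c ^ γ / σ) := hminbound
    have hrw : A / σ * c ^ (γ - 1) = A * c ^ γ / σ / c := by
      rw [Real.rpow_sub hc0, Real.rpow_one]
      field_simp
    rw [hrw, ENNReal.ofReal_div_of_pos hc0]
    rw [ENNReal.le_div_iff_mul_le (Or.inl (by simp [ENNReal.ofReal_eq_zero]; linarith))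
      (Or.inl ENNReal.ofReal_ne_top)]
    rw [mul_comm]; exact hmul
  · -- part 2
    have hset : MeasurableSet {u : Fin n → ℝ | 1 < c * ∑ j, u j} :=
      measurableSet_lt measurable_const (hS.const_mul c)
    have h1 : μ {u : Fin n → ℝ | 1 < c * ∑ j, u j}
        = ∫⁻ u in {u : Fin n → ℝ | 1 < c * ∑ j, u j},
            ENNReal.ofReal (min 1 (c * S u)) ∂μ := by
      rw [← setLIntegral_one]
      refine lintegral_congr_ae ?_
      filter_upwards [ae_restrict_mem hset] with u hmem
      rw [min_eq_left hmem.le, ENNReal.ofReal_one]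
    rw [h1]
    calc ∫⁻ u in {u : Fin n → ℝ | 1 < c * ∑ j, u j},
            ENNReal.ofReal (min 1 (c * S u)) ∂μ
        ≤ ∫⁻ u, ENNReal.ofReal (min 1 (c * S u)) ∂μ := setLIntegral_le_lintegral _ _
      _ ≤ ENNReal.ofReal (A * c ^ γ / σ) := hminbound
      _ = ENNReal.ofReal (A / σ * c ^ γ) := by rw [div_mul_eq_mul_div, mul_comm A, mul_comm _ A]
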